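/- Every shortest negative cycle in an unbalanced signed graph whose index exceeds (1/2)(√(n²-8) + n - 4) must be a triangle; equivalently, if an unbalanced signed graph Γ on n vertices has no negative triangle, then λ_1(Γ) ≤ (1/2)(√(n²-8) + n - 4) < n - 2. -/

import Mathlib

open Matrix BigOperators

/-- `A` is the adjacency matrix of a signed graph: symmetric, zero diagonal,
entries in `{0, 1, -1}`. -/
def IsSignedAdj {n : ℕ} (A : Matrix (Fin n) (Fin n) ℝ) : Prop :=
  (∀ i j, A i j = A j i) ∧ (∀ i, A i i = 0) ∧ (∀ i j, A i j = 0 ∨ A i j = 1 ∨ A i j = -1)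

/-- The underlying simple graph of the signed graph with adjacency matrix `A`. -/
def graphOf {n : ℕ} (A : Matrix (Fin n) (Fin n) ℝ) : SimpleGraph (Fin n) where
  Adj i j := i ≠ j ∧ A i j ≠ 0 ∧ A j i ≠ 0
  symm := ⟨by intro i j h; exact ⟨h.1.symm, h.2.2, h.2.1⟩⟩
  loopless := ⟨by intro i h; exact h.1 rfl⟩

/-- The sign of a walk: the product of the signs of its edges. -/
def walkSign {n : ℕ} (A : Matrix (Fin n) (Fin n) ℝ) {G : SimpleGraph (Fin n)}
    {u v : Fin n} (w : G.Walk u v) : ℝ :=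
  (w.darts.map fun d => A d.fst d.snd).prod

/-- A signed graph is unbalanced if it has a cycle with sign `-1`. -/
def IsUnbalanced {n : ℕ} (A : Matrix (Fin n) (Fin n) ℝ) : Prop :=
  ∃ (u : Fin n) (w : (graphOf A).Walk u u), w.IsCycle ∧ walkSign A w = -1

/-- Every cycle contained in `S` is positive. -/
def IsBalancedOn {n : ℕ} (A : Matrix (Fin n) (Fin n) ℝ) (S : Set (Fin n)) : Prop :=
  ∀ (u : Fin n) (w : (graphOf A).Walk u u), w.IsCycle → (∀ v ∈ w.support, v ∈ S) →
    walkSign A w = 1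

/-- `S` spans a complete subgraph. -/
def IsCompleteOn {n : ℕ} (A : Matrix (Fin n) (Fin n) ℝ) (S : Set (Fin n)) : Prop :=
  ∀ i ∈ S, ∀ j ∈ S, i ≠ j → A i j ≠ 0

/-- `S` spans an unbalanced complete subgraph. -/
def UnbalancedCompleteOn {n : ℕ} (A : Matrix (Fin n) (Fin n) ℝ) (S : Set (Fin n)) : Prop :=
  IsCompleteOn A S ∧ ∃ (u : Fin n) (w : (graphOf A).Walk u u), w.IsCycle ∧
    (∀ v ∈ w.support, v ∈ S) ∧ walkSign A w = -1

/-- The signed graph contains no unbalanced complete subgraph on `k` vertices. -/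
def KminusFree {n : ℕ} (A : Matrix (Fin n) (Fin n) ℝ) (k : ℕ) : Prop :=
  ¬ ∃ S : Finset (Fin n), S.card = k ∧ UnbalancedCompleteOn A ↑S

/-- The largest eigenvalue of `A`. -/
noncomputable def lam1 {n : ℕ} (A : Matrix (Fin n) (Fin n) ℝ) : ℝ :=
  sSup {μ : ℝ | ∃ x : Fin n → ℝ, x ≠ 0 ∧ A.mulVec x = μ • x}

/-- The signed graph `Γ_{1,r-2}`: vertices `1,…,n-1` form an all-positive complete graph,
vertex `0` is joined to vertex `1` by a negative edge and to vertices `2,…,r-1`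
by positive edges. -/
def GammaMat (n r : ℕ) : Matrix (Fin n) (Fin n) ℝ :=
  Matrix.of fun i j =>
    if i = j then 0
    else if i.val = 0 then (if j.val = 1 then -1 else if j.val < r then 1 else 0)
    else if j.val = 0 then (if i.val = 1 then -1 else if i.val < r then 1 else 0)
    else 1


/-!
Take an eigenvector `z` for `μ`, scaled so that its entry of largest absolute value is
`z u = 1`, and switch the signed graph so that every edge at `u` is positive. Row `u` of
`A z = μ z` gives `μ ≤ deg u`, so if `μ > n - 3` then `u` misses at most one other vertex.
If `u` misses none, the absence of negative triangles forces every edge to be positive, so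
the graph is balanced. If `u` misses exactly `w`, the vertices `P` joined to `w` positively and
`Q` joined to it negatively are both nonempty (by unbalance), and no edge joins `P` to `Q` (it
would close a negative triangle with `w`). Since `z ≥ 0` off `u, w`, summing rows
`j ∈ P` and `j ∈ Q` of the eigen-equation and using `μ = ∑_{k ≠ u, w} z k` yields
`μ² ≤ (n - 4) μ + 2n - 6`, whose larger root is `(√(n² - 8) + n - 4) / 2`.
-/

open Finset

section Switching

variable {ι R : Type*} [CommRing R]

def IsSignVector (σ : ι → R) : Prop :=
  ∀ i, σ i = 1 ∨ σ i = -1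

lemma IsSignVector.mul_self_apply {σ : ι → R} (hσ : IsSignVector σ) (i : ι) :
    σ i * σ i = 1 := by
  rcases hσ i with h | h <;> simp [h]

lemma IsSignVector.mul {σ τ : ι → R} (hτ : IsSignVector τ) (hσ : IsSignVector σ) :
    IsSignVector (τ * σ) := fun i => by
  rcases hτ i with h | h <;> rcases hσ i with h' | h' <;> simp [h, h']

def switch [Fintype ι] [DecidableEq ι] (σ : ι → R) (A : Matrix ι ι R) : Matrix ι ι R :=
  diagonal σ * A * diagonal σ

@[simp]
lemma switch_apply [Fintype ι] [DecidableEq ι] (σ : ι → R) (A : Matrix ι ι R) (i j : ι) :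
    switch σ A i j = σ i * A i j * σ j := by
  simp [switch, diagonal_mul, mul_diagonal]

lemma switch_switch [Fintype ι] [DecidableEq ι] (τ σ : ι → R) (A : Matrix ι ι R) :
    switch τ (switch σ A) = switch (τ * σ) A := by
  ext i j
  simp only [switch_apply, Pi.mul_apply]
  ring

lemma switch_mulVec [Fintype ι] [DecidableEq ι] {σ : ι → R} (hσ : IsSignVector σ)
    (A : Matrix ι ι R) (z : ι → R) : switch σ A *ᵥ (σ * z) = σ * (A *ᵥ z) := by
  have hdiag : diagonal σ * diagonal σ = 1 := by
    rw [diagonal_mul_diagonal, ← diagonal_one]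
    exact congrArg diagonal (funext hσ.mul_self_apply)
  have hvec : ∀ v : ι → R, σ * v = diagonal σ *ᵥ v := fun v => funext fun i => by
    rw [mulVec_diagonal, Pi.mul_apply]
  rw [hvec, hvec, switch, mulVec_mulVec, mul_assoc, hdiag, mul_one, mulVec_mulVec]

def NoNegTriangle (A : Matrix ι ι R) : Prop :=
  ∀ i j k, A i j * A j k * A k i ≠ -1

lemma noNegTriangle_switch [Fintype ι] [DecidableEq ι] {A : Matrix ι ι R}
    (htri : NoNegTriangle A) {σ : ι → R} (hσ : IsSignVector σ) :
    NoNegTriangle (switch σ A) := fun i j k => by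
  have h : switch σ A i j * switch σ A j k * switch σ A k i =
      (σ i * σ i) * (σ j * σ j) * (σ k * σ k) * (A i j * A j k * A k i) := by
    simp only [switch_apply]
    ring
  rw [h, hσ.mul_self_apply, hσ.mul_self_apply, hσ.mul_self_apply, one_mul, one_mul, one_mul]
  exact htri i j k

variable {n : ℕ}

lemma isSignedAdj_switch {A : Matrix (Fin n) (Fin n) ℝ} (hA : IsSignedAdj A) {σ : Fin n → ℝ}
    (hσ : IsSignVector σ) : IsSignedAdj (switch σ A) := by
  obtain ⟨hsymm, hdiag, hval⟩ := hA
  refine ⟨fun i j => ?_, fun i => by simp [hdiag], fun i j => ?_⟩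
  · simp only [switch_apply, hsymm i j]
    ring
  · rcases hσ i with hi | hi <;> rcases hσ j with hj | hj <;>
      rcases hval i j with h | h | h <;> simp [hi, hj, h]

/-- By Harary's theorem this is balance. -/
def SwitchesToNonneg (A : Matrix (Fin n) (Fin n) ℝ) : Prop :=
  ∃ σ, IsSignVector σ ∧ ∀ i j, 0 ≤ switch σ A i j

lemma SwitchesToNonneg.of_switch {A : Matrix (Fin n) (Fin n) ℝ} {σ : Fin n → ℝ}
    (hσ : IsSignVector σ) (h : SwitchesToNonneg (switch σ A)) : SwitchesToNonneg A := by
  obtain ⟨τ, hτ, hnonneg⟩ := h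
  exact ⟨τ * σ, hτ.mul hσ, by rwa [← switch_switch]⟩

lemma IsSignedAdj.eq_mul_of_switch_nonneg {A : Matrix (Fin n) (Fin n) ℝ} (hA : IsSignedAdj A)
    {σ : Fin n → ℝ} (hσ : IsSignVector σ) {i j : Fin n} (hij : A i j ≠ 0)
    (h : 0 ≤ switch σ A i j) : A i j = σ i * σ j := by
  rw [switch_apply] at h
  rcases hσ i with hi | hi <;> rcases hσ j with hj | hj <;>
    rcases hA.2.2 i j with h' | h' | h' <;> simp_all <;> linarith

lemma walkSign_eq_of_switch_nonneg {A : Matrix (Fin n) (Fin n) ℝ} (hA : IsSignedAdj A)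
    {σ : Fin n → ℝ} (hσ : IsSignVector σ) (hnonneg : ∀ i j, 0 ≤ switch σ A i j)
    {u v : Fin n} (w : (graphOf A).Walk u v) : walkSign A w = σ u * σ v := by
  induction w with
  | nil => simp [walkSign, hσ.mul_self_apply]
  | @cons a b c hab p ih =>
    change A a b * walkSign A p = σ a * σ c
    rw [ih, hA.eq_mul_of_switch_nonneg hσ hab.2.1 (hnonneg a b),
      show σ a * σ b * (σ b * σ c) = σ a * σ c * (σ b * σ b) by ring, hσ.mul_self_apply,
      mul_one]

lemma IsUnbalanced.not_switchesToNonneg {A : Matrix (Fin n) (Fin n) ℝ} (hA : IsSignedAdj A)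
    (hunb : IsUnbalanced A) : ¬ SwitchesToNonneg A := by
  rintro ⟨σ, hσ, hnonneg⟩
  obtain ⟨u, w, -, hw⟩ := hunb
  have h := walkSign_eq_of_switch_nonneg hA hσ hnonneg w
  rw [hw, hσ.mul_self_apply] at h
  norm_num at h

lemma exists_switch_row_eq_abs {A : Matrix (Fin n) (Fin n) ℝ} {u : Fin n} (hu : A u u = 0) :
    ∃ σ, IsSignVector σ ∧ σ u = 1 ∧ ∀ k, switch σ A u k = |A u k| := by
  refine ⟨fun k => if A u k < 0 then -1 else 1, fun k => ?_, by simp [hu], fun k => ?_⟩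
  · dsimp only
    split_ifs <;> simp
  · simp only [switch_apply, hu, lt_irrefl, if_false, one_mul]
    split_ifs with h
    · rw [abs_of_neg h, mul_neg_one]
    · rw [abs_of_nonneg (not_lt.mp h), mul_one]

end Switching

section Eigenvectors

variable {ι : Type*} [Fintype ι]

structure IsPeakEigenvector (A : Matrix ι ι ℝ) (μ : ℝ) (z : ι → ℝ) (u : ι) :
    Prop where
  mulVec_eq : A *ᵥ z = μ • z
  apply_peak : z u = 1
  abs_le_one : ∀ k, |z k| ≤ 1

lemma exists_isPeakEigenvector {A : Matrix ι ι ℝ} {μ : ℝ} {x : ι → ℝ}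
    (hx : x ≠ 0) (he : A *ᵥ x = μ • x) : ∃ z u, IsPeakEigenvector A μ z u := by
  obtain ⟨i, hi⟩ := Function.ne_iff.mp hx
  obtain ⟨u, -, hmax⟩ := exists_max_image univ (fun k => |x k|) ⟨i, mem_univ i⟩
  have hxu : x u ≠ 0 := by
    intro h
    have := hmax i (mem_univ i)
    rw [h, abs_zero] at this
    exact hi (abs_nonpos_iff.mp this)
  refine ⟨(x u)⁻¹ • x, u, ⟨?_, inv_mul_cancel₀ hxu, fun k => ?_⟩⟩
  · rw [mulVec_smul, he, smul_comm]
  · rw [Pi.smul_apply, smul_eq_mul, abs_mul, abs_inv, inv_mul_le_one₀ (abs_pos.mpr hxu)]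
    exact hmax k (mem_univ k)

lemma IsPeakEigenvector.sum_mul_eq {A : Matrix ι ι ℝ} {μ : ℝ} {z : ι → ℝ}
    {u : ι} (hz : IsPeakEigenvector A μ z u) (j : ι) :
    ∑ k, A j k * z k = μ * z j :=
  congrFun hz.mulVec_eq j

lemma IsPeakEigenvector.sum_le_card {A : Matrix ι ι ℝ} {μ : ℝ} {z : ι → ℝ}
    {u : ι} (hz : IsPeakEigenvector A μ z u) (s : Finset ι) : ∑ k ∈ s, z k ≤ #s := by
  rw [← nsmul_one]
  exact sum_le_card_nsmul _ _ _ fun k _ => (le_abs_self _).trans (hz.abs_le_one k)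

lemma IsPeakEigenvector.switch [DecidableEq ι] {A : Matrix ι ι ℝ} {μ : ℝ} {z : ι → ℝ}
    {u : ι} (hz : IsPeakEigenvector A μ z u) {σ : ι → ℝ} (hσ : IsSignVector σ)
    (hσu : σ u = 1) : IsPeakEigenvector (_root_.switch σ A) μ (σ * z) u where
  mulVec_eq := by rw [switch_mulVec hσ, hz.mulVec_eq, mul_smul_comm]
  apply_peak := by rw [Pi.mul_apply, hσu, hz.apply_peak, one_mul]
  abs_le_one k := by
    rw [Pi.mul_apply, abs_mul]
    rcases hσ k with h | h <;> simpa [h] using hz.abs_le_one k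

end Eigenvectors

lemma sum_univ_eq_add_add_sum_erase {α M : Type*} [Fintype α] [DecidableEq α] [AddCommMonoid M]
    (f : α → M) {u w : α} (hwu : w ≠ u) :
    ∑ k, f k = f u + f w + ∑ k ∈ (univ.erase u).erase w, f k := by
  rw [add_assoc, add_sum_erase _ _ (mem_erase.2 ⟨hwu, mem_univ w⟩),
    add_sum_erase _ _ (mem_univ u)]

lemma card_erase_erase_add_two {α : Type*} [Fintype α] [DecidableEq α] {u w : α}
    (hwu : w ≠ u) :
    #((univ.erase u).erase w) + 2 = Fintype.card α := by
  rw [← card_univ, ← card_erase_add_one (mem_univ u),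
    ← card_erase_add_one (mem_erase.2 ⟨hwu, mem_univ w⟩)]

section SignedGraphs

variable {n : ℕ} {A : Matrix (Fin n) (Fin n) ℝ}

lemma IsSignedAdj.abs_le_one (hA : IsSignedAdj A) (i j : Fin n) : |A i j| ≤ 1 := by
  rcases hA.2.2 i j with h | h | h <;> simp [h]

lemma IsSignedAdj.abs_eq_one (hA : IsSignedAdj A) {i j : Fin n} (h : A i j ≠ 0) :
    |A i j| = 1 := by
  rcases hA.2.2 i j with h' | h' | h' <;> simp_all

lemma IsSignedAdj.mul_le_one (hA : IsSignedAdj A) (i j : Fin n) {t : ℝ} (ht : |t| ≤ 1) :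
    A i j * t ≤ 1 :=
  (le_abs_self _).trans <| by
    rw [abs_mul]
    exact mul_le_one₀ (hA.abs_le_one i j) (abs_nonneg t) ht

lemma IsSignedAdj.nonneg_of_row_eq_one (hA : IsSignedAdj A) (htri : NoNegTriangle A)
    {u i j : Fin n} (hi : i = u ∨ A u i = 1) (hj : j = u ∨ A u j = 1) : 0 ≤ A i j := by
  obtain ⟨hsymm, hdiag, hval⟩ := hA
  rcases hi with rfl | hi <;> rcases hj with rfl | hj
  · rw [hdiag]
  · rw [hj]; exact zero_le_one
  · rw [hsymm, hi]; exact zero_le_one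
  · have h := htri u i j
    rw [hi, hsymm j u, hj, one_mul, mul_one] at h
    rcases hval i j with h' | h' | h' <;> simp_all

lemma IsSignedAdj.switchesToNonneg_of_row_eq_one (hA : IsSignedAdj A) (htri : NoNegTriangle A)
    {u : Fin n} (hrow : ∀ k, k ≠ u → A u k = 1) : SwitchesToNonneg A := by
  refine ⟨1, fun _ => Or.inl rfl, fun i j => ?_⟩
  simp only [switch_apply, Pi.one_apply, one_mul, mul_one]
  exact hA.nonneg_of_row_eq_one htri (or_iff_not_imp_left.mpr (hrow i))
    (or_iff_not_imp_left.mpr (hrow j))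

lemma cast_card_erase_erase_erase {u w k : Fin n} (hwu : w ≠ u)
    (hk : k ∈ (univ.erase u).erase w) : (#(((univ.erase u).erase w).erase k) : ℝ) = n - 3 := by
  have h := congrArg (Nat.cast : ℕ → ℝ) (card_erase_erase_add_two hwu)
  rw [← card_erase_add_one hk, Fintype.card_fin] at h
  push_cast at h
  linarith

lemma IsPeakEigenvector.le_sub_three (hA : IsSignedAdj A) {μ : ℝ} {z : Fin n → ℝ} {u : Fin n}
    (hz : IsPeakEigenvector A μ z u) {w w' : Fin n} (hwu : w ≠ u) (hw'u : w' ≠ u)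
    (hw'w : w' ≠ w) (hw : A u w = 0) (hw' : A u w' = 0) : μ ≤ n - 3 := by
  set S := (univ.erase u).erase w
  have hw'S : w' ∈ S := by simp [S, hw'u, hw'w]
  have hμ : μ = ∑ k ∈ S.erase w', A u k * z k := by
    have h := hz.sum_mul_eq u
    rw [hz.apply_peak, sum_univ_eq_add_add_sum_erase _ hwu, ← add_sum_erase _ _ hw'S,
      hA.2.1 u, hw, hw'] at h
    linarith
  rw [hμ, ← cast_card_erase_erase_erase hwu hw'S, ← nsmul_one]
  exact sum_le_card_nsmul _ _ _ fun k _ => hA.mul_le_one u k (hz.abs_le_one k)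

end SignedGraphs

section IndexBound

noncomputable def indexBound (m : ℝ) : ℝ :=
  (√(m ^ 2 - 8) + m - 4) / 2

lemma le_indexBound_of_sq_le {m μ : ℝ} (h : μ ^ 2 ≤ (m - 4) * μ + 2 * m - 6) :
    μ ≤ indexBound m := by
  have hsq : (2 * μ - (m - 4)) ^ 2 ≤ m ^ 2 - 8 := by nlinarith
  have := (le_abs_self _).trans (Real.abs_le_sqrt hsq)
  unfold indexBound
  linarith

lemma sub_three_le_indexBound {m : ℝ} (hm : 3 ≤ m) : m - 3 ≤ indexBound m := by
  have := (le_abs_self _).trans (Real.abs_le_sqrt (by nlinarith : (m - 2) ^ 2 ≤ m ^ 2 - 8))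
  unfold indexBound
  linarith

lemma indexBound_lt {m : ℝ} (hm : 3 ≤ m) : indexBound m < m - 2 := by
  have := (Real.sqrt_lt' (by linarith)).mpr (by linarith : m ^ 2 - 8 < m ^ 2)
  unfold indexBound
  linarith

end IndexBound

section PositiveStar

variable {n : ℕ} {B : Matrix (Fin n) (Fin n) ℝ} {u w : Fin n}

structure IsPositiveStarExcept (B : Matrix (Fin n) (Fin n) ℝ) (u w : Fin n) : Prop where
  ne : w ≠ u
  apply_eq_zero : B u w = 0
  apply_eq_one : ∀ k, k ≠ u → k ≠ w → B u k = 1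

namespace IsPositiveStarExcept

lemma mem_of_apply_ne_zero (hB : IsSignedAdj B) (hstar : IsPositiveStarExcept B u w) {k : Fin n}
    (hk : B k w ≠ 0) : k ∈ (univ.erase u).erase w := by
  refine mem_erase.2 ⟨fun h => hk ?_, mem_erase.2 ⟨fun h => hk ?_, mem_univ k⟩⟩
  · rw [h, hB.2.1]
  · rw [h, hstar.apply_eq_zero]

lemma nonneg (hB : IsSignedAdj B) (htri : NoNegTriangle B) (hstar : IsPositiveStarExcept B u w)
    {i j : Fin n} (hi : i ≠ w) (hj : j ≠ w) : 0 ≤ B i j :=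
  hB.nonneg_of_row_eq_one htri (or_iff_not_imp_left.mpr fun h => hstar.apply_eq_one i h hi)
    (or_iff_not_imp_left.mpr fun h => hstar.apply_eq_one j h hj)

lemma apply_eq_zero_of_apply_right (hB : IsSignedAdj B) (htri : NoNegTriangle B)
    (hstar : IsPositiveStarExcept B u w) {j k : Fin n} (hj : B j w = 1) (hk : B k w = -1) :
    B j k = 0 := by
  have hjw : j ≠ w := fun h => by rw [h, hB.2.1] at hj; norm_num at hj
  have hkw : k ≠ w := fun h => by rw [h, hB.2.1] at hk; norm_num at hk
  have hjk := hstar.nonneg hB htri hjw hkw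
  have h := htri j k w
  rw [hk, hB.1 w j, hj] at h
  rcases hB.2.2 j k with h' | h' | h'
  · exact h'
  · rw [h'] at h
    norm_num at h
  · rw [h'] at hjk
    norm_num at hjk

lemma switchesToNonneg (hB : IsSignedAdj B) (htri : NoNegTriangle B)
    (hstar : IsPositiveStarExcept B u w) {ε : ℝ} (hε : ε = 1 ∨ ε = -1)
    (hεw : ∀ k, 0 ≤ ε * B k w) : SwitchesToNonneg B := by
  refine ⟨fun k => if k = w then ε else 1, fun k => ?_, fun i j => ?_⟩
  · dsimp only
    split_ifs <;> simp [hε]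
  simp only [switch_apply]
  by_cases hi : i = w <;> by_cases hj : j = w <;> simp only [hi, hj, if_true, if_false]
  · rw [hB.2.1, mul_zero, zero_mul]
  · rw [mul_one, hB.1]
    exact hεw j
  · rw [one_mul, mul_comm]
    exact hεw i
  · rw [one_mul, mul_one]
    exact hstar.nonneg hB htri hi hj

lemma exists_apply_right_eq (hB : IsSignedAdj B) (htri : NoNegTriangle B)
    (hbal : ¬ SwitchesToNonneg B) (hstar : IsPositiveStarExcept B u w) {ε : ℝ}
    (hε : ε = 1 ∨ ε = -1) : ∃ k, B k w = ε := by
  by_contra h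
  refine hbal (hstar.switchesToNonneg hB htri (ε := -ε) (by rcases hε with rfl | rfl <;> simp)
    fun k => ?_)
  have hk : B k w ≠ ε := fun h' => h ⟨k, h'⟩
  rcases hε with rfl | rfl <;> rcases hB.2.2 k w with h' | h' | h' <;> simp_all

variable {μ : ℝ} {y : Fin n → ℝ}

lemma sum_eigenvector_eq (hB : IsSignedAdj B) (hstar : IsPositiveStarExcept B u w)
    (hy : IsPeakEigenvector B μ y u) : ∑ k ∈ (univ.erase u).erase w, y k = μ := by
  have h := hy.sum_mul_eq u
  rw [hy.apply_peak, sum_univ_eq_add_add_sum_erase _ hstar.ne, hB.2.1, hstar.apply_eq_zero,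
    zero_mul, zero_mul, zero_add, zero_add, mul_one] at h
  rw [← h]
  refine sum_congr rfl fun k hk => ?_
  rw [mem_erase, mem_erase] at hk
  rw [hstar.apply_eq_one k hk.2.1 hk.1, one_mul]

lemma eigenvector_nonneg (hB : IsSignedAdj B) (hstar : IsPositiveStarExcept B u w)
    (hy : IsPeakEigenvector B μ y u) (hμ : n - 3 < μ) {k : Fin n}
    (hk : k ∈ (univ.erase u).erase w) : 0 ≤ y k := by
  have hrest := hy.sum_le_card (((univ.erase u).erase w).erase k)
  rw [cast_card_erase_erase_erase hstar.ne hk] at hrest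
  have h := add_sum_erase _ y hk
  rw [hstar.sum_eigenvector_eq hB hy] at h
  linarith

lemma row_bound (hB : IsSignedAdj B) (hstar : IsPositiveStarExcept B u w)
    (hy : IsPeakEigenvector B μ y u) (hμ : n - 3 < μ)
    {j : Fin n} (hj : j ∈ (univ.erase u).erase w) {Q : Finset (Fin n)}
    (hQ : Q ⊆ (univ.erase u).erase w) (hjQ : j ∉ Q) (hQ0 : ∀ k ∈ Q, B j k = 0) :
    μ * y j + y j + ∑ k ∈ Q, y k ≤ 1 + μ + B j w * y w := by
  set N := (univ.erase u).erase w
  have hjw : j ≠ w := (mem_erase.1 hj).1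
  have hju : j ≠ u := (mem_erase.1 (mem_erase.1 hj).2).1
  have hrow := hy.sum_mul_eq j
  rw [sum_univ_eq_add_add_sum_erase _ hstar.ne, hB.1 j u, hstar.apply_eq_one j hju hjw,
    hy.apply_peak, one_mul] at hrow
  have hN : ∑ k ∈ N, B j k * y k + y j + ∑ k ∈ Q, y k ≤ μ := by
    have hyj : y j = ∑ k ∈ N, if k = j then y k else 0 := by rw [sum_ite_eq', if_pos hj]
    rw [hyj, ← inter_eq_right.mpr hQ, ← sum_ite_mem, ← sum_add_distrib, ← sum_add_distrib,
      ← hstar.sum_eigenvector_eq hB hy]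
    refine sum_le_sum fun k hk => ?_
    by_cases hkj : k = j
    · rw [hkj, hB.2.1, if_pos rfl, if_neg hjQ]
      simp
    by_cases hkQ : k ∈ Q
    · rw [hQ0 k hkQ, if_neg hkj, if_pos hkQ]
      simp
    rw [if_neg hkj, if_neg hkQ, add_zero, add_zero]
    refine mul_le_of_le_one_left (hstar.eigenvector_nonneg hB hy hμ hk) ?_
    exact (le_abs_self _).trans (hB.abs_le_one j k)
  linarith

lemma sum_row_bound (hB : IsSignedAdj B) (hstar : IsPositiveStarExcept B u w)
    (hy : IsPeakEigenvector B μ y u) (hμ : n - 3 < μ) {P Q : Finset (Fin n)}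
    (hP : P ⊆ (univ.erase u).erase w) (hQ : Q ⊆ (univ.erase u).erase w) (hPQ : Disjoint P Q)
    {ε : ℝ} (hPw : ∀ j ∈ P, B j w = ε) (hPQ0 : ∀ j ∈ P, ∀ k ∈ Q, B j k = 0) :
    (μ + 1) * ∑ j ∈ P, y j + #P * ∑ k ∈ Q, y k ≤ #P * (1 + μ + ε * y w) := by
  calc (μ + 1) * ∑ j ∈ P, y j + #P * ∑ k ∈ Q, y k
      = ∑ j ∈ P, (μ * y j + y j + ∑ k ∈ Q, y k) := by
        simp only [sum_add_distrib, ← mul_sum, sum_const, nsmul_eq_mul]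
        ring
    _ ≤ ∑ j ∈ P, (1 + μ + ε * y w) := sum_le_sum fun j hj => by
        rw [← hPw j hj]
        exact hstar.row_bound hB hy hμ (hP hj) hQ (disjoint_left.mp hPQ hj) (hPQ0 j hj)
    _ = #P * (1 + μ + ε * y w) := by rw [sum_const, nsmul_eq_mul]

lemma le_sum_add_sum (hB : IsSignedAdj B) (hstar : IsPositiveStarExcept B u w)
    (hy : IsPeakEigenvector B μ y u) {P Q : Finset (Fin n)} (hP : P ⊆ (univ.erase u).erase w)
    (hQ : Q ⊆ (univ.erase u).erase w) (hPQ : Disjoint P Q) :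
    μ ≤ ∑ j ∈ P, y j + ∑ k ∈ Q, y k + (n - 2 - #P - #Q) := by
  have hPQN := union_subset hP hQ
  have hcard := congrArg (Nat.cast : ℕ → ℝ) (card_sdiff_add_card_eq_card hPQN)
  rw [card_union_of_disjoint hPQ] at hcard
  have hN := congrArg (Nat.cast : ℕ → ℝ) (card_erase_erase_add_two hstar.ne)
  rw [Fintype.card_fin] at hN
  push_cast at hcard hN
  have hrest := hy.sum_le_card (((univ.erase u).erase w) \ (P ∪ Q))
  rw [← hstar.sum_eigenvector_eq hB hy, ← sum_sdiff hPQN, sum_union hPQ]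
  linarith

lemma eigenvalue_sq_le (hB : IsSignedAdj B) (htri : NoNegTriangle B)
    (hbal : ¬ SwitchesToNonneg B) (hstar : IsPositiveStarExcept B u w)
    (hy : IsPeakEigenvector B μ y u) (hμ : n - 3 < μ) :
    μ ^ 2 ≤ (n - 4) * μ + 2 * n - 6 := by
  set P := univ.filter fun k => B k w = 1
  set Q := univ.filter fun k => B k w = -1
  have hPN : P ⊆ (univ.erase u).erase w := fun k hk =>
    hstar.mem_of_apply_ne_zero hB (by rw [(mem_filter.1 hk).2]; norm_num)
  have hQN : Q ⊆ (univ.erase u).erase w := fun k hk =>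
    hstar.mem_of_apply_ne_zero hB (by rw [(mem_filter.1 hk).2]; norm_num)
  have hPQ : Disjoint P Q := disjoint_filter.2 fun k _ h1 h2 => by rw [h1] at h2; norm_num at h2
  have hPQ0 : ∀ j ∈ P, ∀ k ∈ Q, B j k = 0 := fun j hj k hk =>
    hstar.apply_eq_zero_of_apply_right hB htri (mem_filter.1 hj).2 (mem_filter.1 hk).2
  have hP : 1 ≤ (#P : ℝ) := by
    obtain ⟨k, hk⟩ := hstar.exists_apply_right_eq hB htri hbal (Or.inl rfl)
    exact Nat.one_le_cast.2 (card_pos.2 ⟨k, mem_filter.2 ⟨mem_univ k, hk⟩⟩)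
  have hQ : 1 ≤ (#Q : ℝ) := by
    obtain ⟨k, hk⟩ := hstar.exists_apply_right_eq hB htri hbal (Or.inr rfl)
    exact Nat.one_le_cast.2 (card_pos.2 ⟨k, mem_filter.2 ⟨mem_univ k, hk⟩⟩)
  have hsumP := hstar.sum_row_bound hB hy hμ hPN hQN hPQ (fun j hj => (mem_filter.1 hj).2) hPQ0
  have hsumQ := hstar.sum_row_bound hB hy hμ hQN hPN hPQ.symm (fun j hj => (mem_filter.1 hj).2)
    fun j hj k hk => by rw [hB.1]; exact hPQ0 k hk j hj
  have hμPQ := hstar.le_sum_add_sum hB hy hPN hQN hPQ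
  have hSP : 0 ≤ ∑ j ∈ P, y j :=
    sum_nonneg fun k hk => hstar.eigenvector_nonneg hB hy hμ (hPN hk)
  have hSQ : 0 ≤ ∑ k ∈ Q, y k :=
    sum_nonneg fun k hk => hstar.eigenvector_nonneg hB hy hμ (hQN hk)
  have hyw := abs_le.1 (hy.abs_le_one w)
  have hμ2 : 0 ≤ μ + 2 := by
    have : (1 : ℝ) ≤ n := by exact_mod_cast u.pos
    linarith
  -- add `hsumP` and `hsumQ` using `#P, #Q ≥ 1` and `|y w| ≤ 1`, then multiply `hμPQ` by `μ+2`
  have hadd : (μ + 2) * (∑ j ∈ P, y j + ∑ k ∈ Q, y k) ≤ (#P + #Q) * (μ + 2) - 2 := by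
    nlinarith [mul_nonneg (sub_nonneg.2 hP) hSQ, mul_nonneg (sub_nonneg.2 hQ) hSP,
      mul_nonneg (sub_nonneg.2 hP) (sub_nonneg.2 hyw.2),
      mul_nonneg (sub_nonneg.2 hQ) (neg_le_iff_add_nonneg.1 hyw.1)]
  nlinarith [mul_le_mul_of_nonneg_left hμPQ hμ2]

end IsPositiveStarExcept

end PositiveStar

lemma eigenvalue_le_indexBound {n : ℕ} (hn : 3 ≤ n) {A : Matrix (Fin n) (Fin n) ℝ}
    (hA : IsSignedAdj A) (hunb : IsUnbalanced A) (htri : NoNegTriangle A) {μ : ℝ}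
    {x : Fin n → ℝ} (hx : x ≠ 0) (he : A *ᵥ x = μ • x) : μ ≤ indexBound n := by
  have hn3 : (3 : ℝ) ≤ n := by exact_mod_cast hn
  obtain ⟨z, u, hz⟩ := exists_isPeakEigenvector hx he
  obtain hμ | hμ := le_or_gt μ (n - 3)
  · exact hμ.trans (sub_three_le_indexBound hn3)
  obtain ⟨σ, hσ, hσu, hrow⟩ := exists_switch_row_eq_abs (hA.2.1 u)
  have hB := isSignedAdj_switch hA hσ
  have htriB := noNegTriangle_switch htri hσ
  have hbal : ¬ SwitchesToNonneg (switch σ A) := fun h =>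
    hunb.not_switchesToNonneg hA (h.of_switch hσ)
  by_cases hw : ∃ w, w ≠ u ∧ A u w = 0
  swap
  · refine (hbal (hB.switchesToNonneg_of_row_eq_one htriB (u := u) fun k hk => ?_)).elim
    rw [hrow, hA.abs_eq_one fun h => hw ⟨k, hk, h⟩]
  obtain ⟨w, hwu, hw⟩ := hw
  by_cases hw' : ∃ w', w' ≠ u ∧ w' ≠ w ∧ A u w' = 0
  · obtain ⟨w', hw'u, hw'w, hw'⟩ := hw'
    exact absurd (hz.le_sub_three hA hwu hw'u hw'w hw hw') (not_le.2 hμ)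
  have hstar : IsPositiveStarExcept (switch σ A) u w :=
    ⟨hwu, by rw [hrow, hw, abs_zero], fun k hku hkw => by
      rw [hrow, hA.abs_eq_one fun h => hw' ⟨k, hku, hkw, h⟩]⟩
  exact le_indexBound_of_sq_le (hstar.eigenvalue_sq_le hB htriB hbal (hz.switch hσ hσu) hμ)

/-- An unbalanced signed graph on `n` vertices with no negative triangle has
`λ₁ ≤ (√(n²-8) + n - 4)/2 < n - 2`. -/
theorem stmt15 {n : ℕ} (hn : 3 ≤ n) (A : Matrix (Fin n) (Fin n) ℝ) (hA : IsSignedAdj A)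
    (hunb : IsUnbalanced A) (htri : ∀ i j k : Fin n, A i j * A j k * A k i ≠ -1) :
    lam1 A ≤ (Real.sqrt ((n : ℝ) ^ 2 - 8) + (n : ℝ) - 4) / 2 ∧
      (Real.sqrt ((n : ℝ) ^ 2 - 8) + (n : ℝ) - 4) / 2 < (n : ℝ) - 2 := by
  have hn3 : (3 : ℝ) ≤ n := by exact_mod_cast hn
  refine ⟨Real.sSup_le ?_ ?_, indexBound_lt hn3⟩
  · rintro μ ⟨x, hx, he⟩
    exact eigenvalue_le_indexBound hn hA hunb htri hx he
  · exact (sub_nonneg.2 hn3).trans (sub_three_le_indexBound hn3)
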